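/- Let B : K → 2^K and D : G → 2^G be maximally monotone, E : K → K monotone and Lipschitz, V : K → G bounded linear. Then the operator A on K × G defined by A(y,z) = (By + Ey + V*z) × (D⁻¹z − Vy) is maximally monotone. -/

import Mathlib

/-!
The operator is `T + C` on the Hilbert sum `K ⊕ G`, where `T = B × D⁻¹` is maximally monotone and
`C (y, z) = (E y + V* z, -V y)` is monotone (its linear part is skew) and Lipschitz.
Adding such a `C` preserves maximality: by Minty's theorem the resolvent of `l T` is an everywhere
defined nonexpansive map, so for small `l > 0` the equation `w = y + l (T + C) y` is solved by the
fixed point of a contraction, and surjectivity of `I + l (T + C)` forces maximality.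

Minty's theorem (`I + T` is onto) is proved variationally: with `φ_T` the Fitzpatrick function,
`φ_T (x, u) + ‖x‖² / 2 + ‖u‖² / 2` is strongly convex and bounded below by `‖x + u‖² / 2`, hence
attains its minimum.
The first-order condition at the minimiser `(x, u)` makes `(-u, -x)` monotonically related to the
graph of `T`, so `-x ∈ T (-u)`, and testing against this very point gives `x + u = 0`.
-/

open RealInnerProductSpace Filter Topology NNReal

section Minimization

variable {X : Type*} [NormedAddCommGroup X] [InnerProductSpace ℝ X]

theorem norm_half_smul_add_sq (x y : X) :
    ‖(1 / 2 : ℝ) • x + (1 / 2 : ℝ) • y‖ ^ 2 = (‖x‖ ^ 2 + ‖y‖ ^ 2) / 2 - ‖x - y‖ ^ 2 / 4 := by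
  rw [← smul_add, norm_smul, mul_pow, norm_add_sq_real, norm_sub_sq_real]
  norm_num
  ring

theorem IsMinOn.inner_add_sub_nonneg {S : Set (X × ℝ)} (hconv : Convex ℝ S) {p q : X × ℝ}
    (hp : p ∈ S) (hq : q ∈ S) (hmin : IsMinOn (fun p : X × ℝ => p.2 + ‖p.1‖ ^ 2 / 2) S p) :
    0 ≤ ⟪p.1, q.1 - p.1⟫ + (q.2 - p.2) := by
  set c := ⟪p.1, q.1 - p.1⟫ + (q.2 - p.2)
  set K := ‖q.1 - p.1‖ ^ 2 / 2
  have hsmall : ∀ t ∈ Set.Ioc (0 : ℝ) 1, 0 ≤ c + t * K := by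
    rintro t ⟨ht0, ht1⟩
    have hle := isMinOn_iff.mp hmin _ (hconv.add_smul_sub_mem hp hq ⟨ht0.le, ht1⟩)
    have hexp : ‖p.1 + t • (q.1 - p.1)‖ ^ 2 = ‖p.1‖ ^ 2 + 2 * t * ⟪p.1, q.1 - p.1⟫
        + t ^ 2 * ‖q.1 - p.1‖ ^ 2 := by
      rw [norm_add_sq_real, real_inner_smul_right, norm_smul, mul_pow, Real.norm_eq_abs, sq_abs]
      ring
    simp only [Prod.fst_add, Prod.snd_add, Prod.smul_fst, Prod.smul_snd, Prod.fst_sub,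
      Prod.snd_sub, smul_eq_mul, hexp] at hle
    have : 0 ≤ t * (c + t * K) := by simp only [c, K]; linarith
    exact nonneg_of_mul_nonneg_right this ht0
  have hlim : Tendsto (fun t : ℝ => c + t * K) (𝓝[>] 0) (𝓝 c) := by
    have h : Tendsto (fun t : ℝ => c + t * K) (𝓝 0) (𝓝 (c + 0 * K)) :=
      ((continuous_const.add (continuous_id.mul continuous_const)).tendsto 0)
    rw [zero_mul, add_zero] at h
    exact h.mono_left nhdsWithin_le_nhds
  exact ge_of_tendsto hlim (eventually_of_mem (Ioc_mem_nhdsGT one_pos) hsmall)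

theorem exists_isMinOn_add_norm_sq_div_two [CompleteSpace X] {S : Set (X × ℝ)}
    (hne : S.Nonempty) (hclosed : IsClosed S) (hconv : Convex ℝ S)
    (hbdd : BddBelow ((fun p : X × ℝ => p.2 + ‖p.1‖ ^ 2 / 2) '' S)) :
    ∃ p ∈ S, IsMinOn (fun p : X × ℝ => p.2 + ‖p.1‖ ^ 2 / 2) S p := by
  set g := fun p : X × ℝ => p.2 + ‖p.1‖ ^ 2 / 2
  set m := sInf (g '' S)
  have hm : ∀ q ∈ S, m ≤ g q := fun q hq => csInf_le hbdd ⟨q, hq, rfl⟩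
  obtain ⟨c, hc_anti, hc_lim, hc_mem⟩ := exists_seq_tendsto_sInf (hne.image g) hbdd
  choose s hsS hs using hc_mem
  -- parallelogram law: near-minimisers are close, since their midpoint lies in `S`
  have hclose : ∀ n k, ‖(s n).1 - (s k).1‖ ^ 2 ≤ 4 * (c n - m) + 4 * (c k - m) := by
    intro n k
    have hmid := hm _ (hconv (hsS n) (hsS k) (by norm_num) (by norm_num) (add_halves 1))
    simp only [g, Prod.fst_add, Prod.snd_add, Prod.smul_fst, Prod.smul_snd, smul_eq_mul,
      norm_half_smul_add_sq] at hmid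
    rw [← hs n, ← hs k]
    simp only [g]
    linarith
  have hcauchy : CauchySeq fun n => (s n).1 := by
    refine cauchySeq_of_le_tendsto_0 (fun N => √(8 * (c N - m))) (fun n k N hn hk => ?_) ?_
    · rw [dist_eq_norm, ← Real.sqrt_sq (norm_nonneg _)]
      refine Real.sqrt_le_sqrt ((hclose n k).trans ?_)
      linarith [hc_anti hn, hc_anti hk]
    · have h := ((hc_lim.sub_const m).const_mul 8).sqrt
      rwa [sub_self, mul_zero, Real.sqrt_zero] at h
  obtain ⟨x, hx⟩ := cauchySeq_tendsto_of_complete hcauchy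
  have hr : Tendsto (fun n => (s n).2) atTop (𝓝 (m - ‖x‖ ^ 2 / 2)) := by
    have h := hc_lim.sub ((hx.norm.pow 2).div_const 2)
    refine h.congr fun n => ?_
    rw [← hs n]
    simp only [g]
    ring
  have hmem : (x, m - ‖x‖ ^ 2 / 2) ∈ S :=
    hclosed.mem_of_tendsto (hx.prodMk_nhds hr) (Eventually.of_forall hsS)
  refine ⟨_, hmem, isMinOn_iff.mpr fun q hq => ?_⟩
  simpa [g] using hm q hq

end Minimization

section Operator

variable {H : Type*} [NormedAddCommGroup H] [InnerProductSpace ℝ H]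

def IsMonotoneOperator (T : H → Set H) : Prop :=
  ∀ x y u v, u ∈ T x → v ∈ T y → 0 ≤ ⟪u - v, x - y⟫

structure IsMaximalMonotone (T : H → Set H) : Prop where
  monotone : IsMonotoneOperator T
  maximal : ∀ x u, (∀ y v, v ∈ T y → 0 ≤ ⟪u - v, x - y⟫) → u ∈ T x

theorem IsMonotoneOperator.norm_sub_le {T : H → Set H} (hT : IsMonotoneOperator T) {l : ℝ}
    (hl : 0 ≤ l) {x y u v : H} (hu : u ∈ T x) (hv : v ∈ T y) :
    ‖x - y‖ ≤ ‖(x + l • u) - (y + l • v)‖ := by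
  have key : ‖x - y‖ ^ 2 ≤ ⟪(x + l • u) - (y + l • v), x - y⟫ := by
    have : (x + l • u) - (y + l • v) = (x - y) + l • (u - v) := by
      rw [smul_sub]; abel
    rw [this, inner_add_left, real_inner_smul_left, real_inner_self_eq_norm_sq]
    nlinarith [hT x y u v hu hv]
  have := key.trans (real_inner_le_norm _ _)
  nlinarith [norm_nonneg (x - y), norm_nonneg ((x + l • u) - (y + l • v))]

theorem IsMonotoneOperator.isMaximalMonotone_of_surjective {T : H → Set H}
    (hT : IsMonotoneOperator T) {l : ℝ} (hl : 0 < l)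
    (hsurj : ∀ w, ∃ x u, u ∈ T x ∧ x + l • u = w) : IsMaximalMonotone T := by
  refine ⟨hT, fun x u hxu => ?_⟩
  obtain ⟨y, v, hv, hyv⟩ := hsurj (x + l • u)
  have hxy : x - y = l • (v - u) := by
    rw [smul_sub, sub_eq_sub_iff_add_eq_add, ← hyv]; abel
  have hvu : v = u := by
    have h := hxu y v hv
    rw [hxy, real_inner_smul_right, ← neg_sub v u, inner_neg_left,
      real_inner_self_eq_norm_sq] at h
    have : ‖v - u‖ ^ 2 ≤ 0 := by nlinarith
    have : ‖v - u‖ = 0 := by nlinarith [norm_nonneg (v - u)]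
    exact sub_eq_zero.mp (norm_eq_zero.mp this)
  rw [hvu, sub_self, smul_zero, sub_eq_zero] at hxy
  rwa [hxy, ← hvu]

theorem IsMaximalMonotone.image_smul_add {T : H → Set H} (hT : IsMaximalMonotone T) {l : ℝ}
    (hl : 0 < l) (w : H) : IsMaximalMonotone (fun x => (fun u => l • u + w) '' T x) := by
  refine ⟨?_, fun x z hz => ⟨l⁻¹ • (z - w), hT.maximal x _ fun y v hv => ?_, ?_⟩⟩
  · rintro x y _ _ ⟨u, hu, rfl⟩ ⟨v, hv, rfl⟩
    rw [add_sub_add_right_eq_sub, ← smul_sub, real_inner_smul_left]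
    exact mul_nonneg hl.le (hT.monotone x y u v hu hv)
  · have h := hz y (l • v + w) ⟨v, hv, rfl⟩
    have : l⁻¹ • (z - w) - v = l⁻¹ • (z - (l • v + w)) := by
      rw [smul_sub, smul_sub, smul_add, inv_smul_smul₀ hl.ne']; abel
    rw [this, real_inner_smul_left]
    exact mul_nonneg (inv_nonneg.mpr hl.le) h
  · simp only [smul_inv_smul₀ hl.ne', sub_add_cancel]

theorem IsMaximalMonotone.inv {T : H → Set H} (hT : IsMaximalMonotone T) :
    IsMaximalMonotone (fun u => {x | u ∈ T x}) := by
  refine ⟨fun x y u v hu hv => ?_, fun x u hxu => hT.maximal u x fun y v hv => ?_⟩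
  · rw [real_inner_comm]; exact hT.monotone u v x y hu hv
  · rw [real_inner_comm]; exact hxu v y hv

theorem inner_sub_sub_eq_inner_sub (x u a b : H) :
    ⟪u - b, x - a⟫ = ⟪x, u⟫ - (⟪x, b⟫ + ⟪a, u⟫ - ⟪a, b⟫) := by
  simp only [inner_sub_right, real_inner_comm x, real_inner_comm a]
  ring

/-- The epigraph of the Fitzpatrick function
`φ_T (x, u) = sup {⟪x, b⟫ + ⟪a, u⟫ - ⟪a, b⟫ | b ∈ T a}`. -/
def fitzpatrickEpigraph (T : H → Set H) : Set (WithLp 2 (H × H) × ℝ) :=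
  {p | ∀ a b, b ∈ T a → ⟪p.1.fst, b⟫ + ⟪a, p.1.snd⟫ - ⟪a, b⟫ ≤ p.2}

theorem convex_fitzpatrickEpigraph (T : H → Set H) : Convex ℝ (fitzpatrickEpigraph T) := by
  intro p hp q hq s t hs ht hst a b hb
  simp only [Prod.fst_add, Prod.snd_add, Prod.smul_fst, Prod.smul_snd, WithLp.add_fst,
    WithLp.add_snd, WithLp.smul_fst, WithLp.smul_snd, inner_add_left, inner_add_right,
    real_inner_smul_left, real_inner_smul_right, smul_eq_mul]
  have hab : ⟪a, b⟫ = s * ⟪a, b⟫ + t * ⟪a, b⟫ := by rw [← add_mul, hst, one_mul]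
  nlinarith [mul_le_mul_of_nonneg_left (hp a b hb) hs, mul_le_mul_of_nonneg_left (hq a b hb) ht]

theorem isClosed_fitzpatrickEpigraph (T : H → Set H) : IsClosed (fitzpatrickEpigraph T) := by
  have : fitzpatrickEpigraph T = ⋂ a, ⋂ b, ⋂ (_ : b ∈ T a),
      {p | ⟪p.1.fst, b⟫ + ⟪a, p.1.snd⟫ - ⟪a, b⟫ ≤ p.2} := by
    ext; simp [fitzpatrickEpigraph]
  rw [this]
  exact isClosed_iInter fun a => isClosed_iInter fun b => isClosed_iInter fun _ =>
    isClosed_le (by fun_prop) (by fun_prop)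

theorem IsMonotoneOperator.mem_fitzpatrickEpigraph {T : H → Set H} (hT : IsMonotoneOperator T)
    {x u : H} (hu : u ∈ T x) : (WithLp.toLp 2 (x, u), ⟪x, u⟫) ∈ fitzpatrickEpigraph T :=
  fun a b hb => by
    have := hT x a u b hu hb
    rw [inner_sub_sub_eq_inner_sub] at this
    simpa using this

theorem IsMaximalMonotone.inner_le_of_mem_fitzpatrickEpigraph {T : H → Set H}
    (hT : IsMaximalMonotone T) {p : WithLp 2 (H × H) × ℝ} (hp : p ∈ fitzpatrickEpigraph T) :
    ⟪p.1.fst, p.1.snd⟫ ≤ p.2 := by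
  by_contra! hlt
  have hmem : p.1.snd ∈ T p.1.fst := hT.maximal _ _ fun a b hb => by
    rw [inner_sub_sub_eq_inner_sub]
    linarith [hp a b hb]
  linarith [hp _ _ hmem]

variable [CompleteSpace H]

theorem IsMaximalMonotone.exists_neg_mem {T : H → Set H}
    (hT : IsMaximalMonotone T) : ∃ x, -x ∈ T x := by
  obtain ⟨a₀, b₀, hb₀⟩ : ∃ a b, b ∈ T a := by
    by_contra! h
    exact h 0 0 (hT.maximal 0 0 fun y v hv => (h y v hv).elim)
  have hbdd : BddBelow ((fun p : WithLp 2 (H × H) × ℝ => p.2 + ‖p.1‖ ^ 2 / 2) ''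
      fitzpatrickEpigraph T) := by
    refine ⟨0, ?_⟩
    rintro _ ⟨p, hp, rfl⟩
    have := hT.inner_le_of_mem_fitzpatrickEpigraph hp
    show 0 ≤ p.2 + ‖p.1‖ ^ 2 / 2
    rw [WithLp.prod_norm_sq_eq_of_L2]
    nlinarith [norm_add_sq_real p.1.fst p.1.snd, sq_nonneg ‖p.1.fst + p.1.snd‖]
  obtain ⟨⟨z, r⟩, hzr, hmin⟩ := exists_isMinOn_add_norm_sq_div_two
    ⟨_, hT.monotone.mem_fitzpatrickEpigraph hb₀⟩ (isClosed_fitzpatrickEpigraph T)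
    (convex_fitzpatrickEpigraph T) hbdd
  have hr : ⟪z.fst, z.snd⟫ ≤ r := hT.inner_le_of_mem_fitzpatrickEpigraph hzr
  have key : ∀ a b, b ∈ T a → ‖z.fst + z.snd‖ ^ 2 ≤ ⟪-z.fst - b, -z.snd - a⟫ := by
    intro a b hb
    have h := hmin.inner_add_sub_nonneg (convex_fitzpatrickEpigraph T) hzr
      (hT.monotone.mem_fitzpatrickEpigraph hb)
    simp only [WithLp.prod_inner_apply, WithLp.ofLp_fst, WithLp.ofLp_snd, inner_sub_right,
      real_inner_self_eq_norm_sq] at h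
    simp only [inner_sub_left, inner_sub_right, inner_neg_left, inner_neg_right, norm_add_sq_real]
    linarith [real_inner_comm z.fst z.snd, real_inner_comm z.fst a, real_inner_comm z.snd b,
      real_inner_comm a b]
  have hmem : -z.fst ∈ T (-z.snd) :=
    hT.maximal _ _ fun a b hb => (sq_nonneg _).trans (key a b hb)
  have hzero : z.fst + z.snd = 0 := by
    have := key _ _ hmem
    rw [sub_self, inner_zero_left] at this
    exact norm_eq_zero.mp (by nlinarith [norm_nonneg (z.fst + z.snd)])
  refine ⟨z.fst, ?_⟩
  rwa [neg_eq_of_add_eq_zero_left hzero] at hmem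


theorem IsMaximalMonotone.exists_add_smul_eq {T : H → Set H} (hT : IsMaximalMonotone T) {l : ℝ}
    (hl : 0 < l) (w : H) : ∃ x u, u ∈ T x ∧ x + l • u = w := by
  obtain ⟨x, u, hu, hxu⟩ := (hT.image_smul_add hl (-w)).exists_neg_mem
  refine ⟨x, u, hu, ?_⟩
  calc x + l • u = x + (l • u + -w) + w := by abel
    _ = w := by rw [show l • u + -w = -x from hxu]; abel

theorem IsMaximalMonotone.add_lipschitzWith {T : H → Set H} (hT : IsMaximalMonotone T)
    {C : H → H} (hCmono : ∀ x y, 0 ≤ ⟪C x - C y, x - y⟫) {L : ℝ≥0} (hC : LipschitzWith L C) :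
    IsMaximalMonotone (fun x => {u | u - C x ∈ T x}) := by
  have hmono : IsMonotoneOperator (fun x => {u | u - C x ∈ T x}) := fun x y u v hu hv => by
    rw [show u - v = (u - C x - (v - C y)) + (C x - C y) by abel, inner_add_left]
    exact add_nonneg (hT.monotone x y _ _ hu hv) (hCmono x y)
  set l : ℝ := ((L : ℝ) + 1)⁻¹
  have hl : 0 < l := by positivity
  refine hmono.isMaximalMonotone_of_surjective hl fun w => ?_
  choose J t ht hJ using hT.exists_add_smul_eq hl
  have hJ_lip : LipschitzWith 1 J := LipschitzWith.of_dist_le_mul fun z z' => by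
    rw [NNReal.coe_one, one_mul, dist_eq_norm, dist_eq_norm]
    simpa only [hJ] using hT.monotone.norm_sub_le hl.le (ht z) (ht z')
  -- `y` solves the inclusion iff it is a fixed point of this contraction
  have hΦ : ContractingWith (1 * (0 + ‖l‖₊ * L)) fun y => J (w - l • C y) := by
    refine ⟨?_, hJ_lip.comp ((LipschitzWith.const w).sub ((lipschitzWith_smul l).comp hC))⟩
    rw [← NNReal.coe_lt_coe]
    push_cast
    rw [Real.norm_of_nonneg hl.le, one_mul, zero_add, inv_mul_lt_one₀ (by positivity)]
    linarith
  obtain ⟨y, hfix, -⟩ := hΦ.exists_fixedPoint w (edist_ne_top _ _)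
  have hy : J (w - l • C y) = y := hfix
  refine ⟨y, t (w - l • C y) + C y, ?_, ?_⟩
  · have hmem := ht (w - l • C y)
    rw [hy] at hmem
    simpa using hmem
  · have := hJ (w - l • C y)
    rw [hy] at this
    rw [smul_add, ← add_assoc, this, sub_add_cancel]

end Operator

section Product

variable {K G : Type*} [NormedAddCommGroup K] [InnerProductSpace ℝ K] [CompleteSpace K]
  [NormedAddCommGroup G] [InnerProductSpace ℝ G] [CompleteSpace G]

theorem IsMaximalMonotone.prod {P : K → Set K} {Q : G → Set G} (hP : IsMaximalMonotone P)
    (hQ : IsMaximalMonotone Q) :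
    IsMaximalMonotone fun p : WithLp 2 (K × G) => {q | q.fst ∈ P p.fst ∧ q.snd ∈ Q p.snd} := by
  refine IsMonotoneOperator.isMaximalMonotone_of_surjective (fun x y u v hu hv => ?_) one_pos
    fun w => ?_
  · rw [WithLp.prod_inner_apply]
    exact add_nonneg (hP.monotone _ _ _ _ hu.1 hv.1) (hQ.monotone _ _ _ _ hu.2 hv.2)
  · obtain ⟨x₁, u₁, hu₁, h₁⟩ := hP.exists_add_smul_eq one_pos w.fst
    obtain ⟨x₂, u₂, hu₂, h₂⟩ := hQ.exists_add_smul_eq one_pos w.snd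
    refine ⟨WithLp.toLp 2 (x₁, x₂), WithLp.toLp 2 (u₁, u₂), ⟨hu₁, hu₂⟩, ?_⟩
    rw [one_smul] at h₁ h₂ ⊢
    rw [← WithLp.toLp_add, Prod.mk_add_mk, h₁, h₂]
    rfl

noncomputable def couplingMap (E : K → K) (V : K →L[ℝ] G) (p : WithLp 2 (K × G)) :
    WithLp 2 (K × G) :=
  WithLp.toLp 2 (E p.fst + ContinuousLinearMap.adjoint V p.snd, -V p.fst)

theorem inner_couplingMap_sub_nonneg {E : K → K} (hE : ∀ x y, 0 ≤ ⟪E x - E y, x - y⟫)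
    (V : K →L[ℝ] G) (p q : WithLp 2 (K × G)) :
    0 ≤ ⟪couplingMap E V p - couplingMap E V q, p - q⟫ := by
  have h : ⟪couplingMap E V p - couplingMap E V q, p - q⟫ =
      ⟪E p.fst - E q.fst, p.fst - q.fst⟫ +
        (⟪ContinuousLinearMap.adjoint V (p.snd - q.snd), p.fst - q.fst⟫ -
          ⟪V (p.fst - q.fst), p.snd - q.snd⟫) := by
    rw [WithLp.prod_inner_apply]
    change ⟪(E p.fst + ContinuousLinearMap.adjoint V p.snd) -
        (E q.fst + ContinuousLinearMap.adjoint V q.snd), p.fst - q.fst⟫ +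
      ⟪-V p.fst - -V q.fst, p.snd - q.snd⟫ = _
    simp only [map_sub, inner_add_left, inner_sub_left, inner_neg_left]
    ring
  rw [h, ContinuousLinearMap.adjoint_inner_left, real_inner_comm (p.snd - q.snd), sub_self,
    add_zero]
  exact hE _ _

theorem lipschitzWith_couplingMap {E : K → K} {L : ℝ≥0} (hE : LipschitzWith L E)
    (V : K →L[ℝ] G) : ∃ L', LipschitzWith L' (couplingMap E V) :=
  ⟨_, (WithLp.prod_lipschitzWith_toLp 2 K G).comp <|
    (((hE.comp LipschitzWith.prod_fst).add
      ((ContinuousLinearMap.adjoint V).lipschitz.comp LipschitzWith.prod_snd)).prodMk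
      (V.lipschitz.comp LipschitzWith.prod_fst).neg).comp
    (WithLp.prod_lipschitzWith_ofLp 2 K G)⟩

end Product

theorem stmt14_general {K G : Type*}
    [NormedAddCommGroup K] [InnerProductSpace ℝ K] [CompleteSpace K]
    [NormedAddCommGroup G] [InnerProductSpace ℝ G] [CompleteSpace G]
    (B : K → Set K) (D : G → Set G)
    (hBmono : ∀ x y u v : K, u ∈ B x → v ∈ B y → ⟪u - v, x - y⟫ ≥ 0)
    (hBmax : ∀ x u : K, (∀ y v : K, v ∈ B y → ⟪u - v, x - y⟫ ≥ 0) → u ∈ B x)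
    (hDmono : ∀ x y u v : G, u ∈ D x → v ∈ D y → ⟪u - v, x - y⟫ ≥ 0)
    (hDmax : ∀ x u : G, (∀ y v : G, v ∈ D y → ⟪u - v, x - y⟫ ≥ 0) → u ∈ D x)
    (E : K → K) (hEmono : ∀ x y : K, ⟪E x - E y, x - y⟫ ≥ 0)
    (δ : ℝ) (hELip : ∀ x y : K, ‖E x - E y‖ ≤ δ * ‖x - y‖)
    (V : K →L[ℝ] G)
    (A : K × G → Set (K × G))
    (hA : ∀ p : K × G, A p = {q : K × G |
      q.1 - E p.1 - (ContinuousLinearMap.adjoint V) p.2 ∈ B p.1 ∧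
      p.2 ∈ D (q.2 + V p.1)})
    (ip : K × G → K × G → ℝ)
    (hip : ∀ p q : K × G, ip p q = ⟪p.1, q.1⟫ + ⟪p.2, q.2⟫) :
    (∀ p q u v : K × G, u ∈ A p → v ∈ A q → ip (u - v) (p - q) ≥ 0) ∧
    (∀ (p u : K × G), (∀ q v : K × G, v ∈ A q → ip (u - v) (p - q) ≥ 0) → u ∈ A p) := by
  have hT := IsMaximalMonotone.prod ⟨hBmono, hBmax⟩ (IsMaximalMonotone.inv ⟨hDmono, hDmax⟩)
  obtain ⟨L, hL⟩ := lipschitzWith_couplingMap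
    (LipschitzWith.of_dist_le' fun x y => by simpa only [dist_eq_norm] using hELip x y) V
  have hS := hT.add_lipschitzWith (inner_couplingMap_sub_nonneg hEmono V) hL
  have hmem : ∀ p u, u ∈ A p ↔ WithLp.toLp 2 u - couplingMap E V (WithLp.toLp 2 p) ∈
      {q | q.fst ∈ B (WithLp.toLp 2 p).fst ∧ (WithLp.toLp 2 p).snd ∈ D q.snd} := by
    intro p u
    rw [hA]
    simp [couplingMap, sub_sub]
  have hip' : ∀ p q u v, ip (u - v) (p - q) =
      ⟪WithLp.toLp 2 u - WithLp.toLp 2 v, WithLp.toLp 2 p - WithLp.toLp 2 q⟫ :=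
    fun p q u v => hip _ _
  refine ⟨fun p q u v hu hv => ?_, fun p u h => (hmem p u).2 (hS.maximal _ _ fun q v hv => ?_)⟩
  · rw [hip']
    exact hS.monotone _ _ _ _ ((hmem p u).1 hu) ((hmem q v).1 hv)
  · simpa only [hip'] using h q.ofLp v.ofLp ((hmem _ _).2 hv)

theorem stmt14 {K G : Type*}
    [NormedAddCommGroup K] [InnerProductSpace ℝ K] [CompleteSpace K]
    [NormedAddCommGroup G] [InnerProductSpace ℝ G] [CompleteSpace G]
    (B : K → Set K) (D : G → Set G)
    (hBmono : ∀ x y u v : K, u ∈ B x → v ∈ B y → ⟪u - v, x - y⟫ ≥ 0)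
    (hBmax : ∀ x u : K, (∀ y v : K, v ∈ B y → ⟪u - v, x - y⟫ ≥ 0) → u ∈ B x)
    (hDmono : ∀ x y u v : G, u ∈ D x → v ∈ D y → ⟪u - v, x - y⟫ ≥ 0)
    (hDmax : ∀ x u : G, (∀ y v : G, v ∈ D y → ⟪u - v, x - y⟫ ≥ 0) → u ∈ D x)
    (E : K → K) (hEmono : ∀ x y : K, ⟪E x - E y, x - y⟫ ≥ 0)
    (δ : ℝ) (hδ : 0 ≤ δ) (hELip : ∀ x y : K, ‖E x - E y‖ ≤ δ * ‖x - y‖)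
    (V : K →L[ℝ] G)
    (A : K × G → Set (K × G))
    (hA : ∀ p : K × G, A p = {q : K × G |
      q.1 - E p.1 - (ContinuousLinearMap.adjoint V) p.2 ∈ B p.1 ∧
      p.2 ∈ D (q.2 + V p.1)})
    (ip : K × G → K × G → ℝ)
    (hip : ∀ p q : K × G, ip p q = ⟪p.1, q.1⟫ + ⟪p.2, q.2⟫) :
    (∀ p q u v : K × G, u ∈ A p → v ∈ A q → ip (u - v) (p - q) ≥ 0) ∧
    (∀ (p u : K × G), (∀ q v : K × G, v ∈ A q → ip (u - v) (p - q) ≥ 0) → u ∈ A p) :=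
  stmt14_general B D hBmono hBmax hDmono hDmax E hEmono δ hELip V A hA ip hip
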